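/- There exists a unique k₀ ∈ (0, 1) such that 2E(k₀) − K(k₀) = 0; moreover 2E(k) − K(k) > 0 for k ∈ (0, k₀) and 2E(k) − K(k) < 0 for k ∈ (k₀, 1). -/

import Mathlib

open Set Real

/-- Complete elliptic integral of the first kind. -/
noncomputable def ellK (k : ℝ) : ℝ :=
  ∫ t in (0:ℝ)..(π/2), 1 / Real.sqrt (1 - k ^ 2 * sin t ^ 2)

/-- Complete elliptic integral of the second kind. -/
noncomputable def ellE (k : ℝ) : ℝ :=
  ∫ t in (0:ℝ)..(π/2), Real.sqrt (1 - k ^ 2 * sin t ^ 2)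

/-!
With `u = 1 - k² sin² t` one has `2E(k) - K(k) = ∫₀^{π/2} φ(u) dt` for `φ(u) = 2√u - 1/√u`, which is
strictly increasing on `(0, ∞)`. As `u` decreases in `k`, `2E - K` is strictly decreasing on
`[0, 1)`. It equals `π/2` at `k = 0` and tends to `-∞` as `k → 1⁻`, since `E ≤ π/2` while
`K(k) ≥ log (1 + π / (2√(1 - k²)))`. The intermediate value theorem then gives the unique zero.
-/

open Filter Topology

noncomputable def ellGap (k : ℝ) : ℝ := 2 * ellE k - ellK k

noncomputable def gapIntegrand (u : ℝ) : ℝ := 2 * √u - 1 / √u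

lemma strictMonoOn_gapIntegrand : StrictMonoOn gapIntegrand (Ioi 0) := by
  intro u hu v _ huv
  have hsqrt : √u < √v := sqrt_lt_sqrt (le_of_lt hu) huv
  have hinv : 1 / √v < 1 / √u := one_div_lt_one_div_of_lt (sqrt_pos.2 hu) hsqrt
  unfold gapIntegrand
  linarith

lemma continuousOn_gapIntegrand : ContinuousOn gapIntegrand (Ioi 0) :=
  (continuous_const.mul continuous_sqrt).continuousOn.sub <|
    continuousOn_const.div continuous_sqrt.continuousOn fun _ hu => (sqrt_pos.2 hu).ne'

lemma one_sub_sq_le_one_sub_sq_mul_sin_sq (k t : ℝ) : 1 - k ^ 2 ≤ 1 - k ^ 2 * sin t ^ 2 := by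
  nlinarith [sin_sq_le_one t, sq_nonneg k]

lemma one_sub_sq_mul_sin_sq_pos {k : ℝ} (hk : k ^ 2 < 1) (t : ℝ) : 0 < 1 - k ^ 2 * sin t ^ 2 :=
  (sub_pos.2 hk).trans_le (one_sub_sq_le_one_sub_sq_mul_sin_sq k t)

lemma continuous_one_div_sqrt_one_sub_sq_mul_sin_sq {k : ℝ} (hk : k ^ 2 < 1) :
    Continuous fun t => 1 / √(1 - k ^ 2 * sin t ^ 2) :=
  continuous_const.div (by fun_prop) fun t => (sqrt_pos.2 (one_sub_sq_mul_sin_sq_pos hk t)).ne'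

lemma continuous_gapIntegrand_one_sub_sq_mul_sin_sq {k : ℝ} (hk : k ^ 2 < 1) :
    Continuous fun t => gapIntegrand (1 - k ^ 2 * sin t ^ 2) :=
  continuousOn_gapIntegrand.comp_continuous (by fun_prop) (one_sub_sq_mul_sin_sq_pos hk)

lemma ellGap_eq_integral {k : ℝ} (hk : k ^ 2 < 1) :
    ellGap k = ∫ t in (0:ℝ)..(π/2), gapIntegrand (1 - k ^ 2 * sin t ^ 2) := by
  unfold ellGap ellE ellK gapIntegrand
  rw [intervalIntegral.integral_sub ((Continuous.intervalIntegrable (by fun_prop) _ _))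
    ((continuous_one_div_sqrt_one_sub_sq_mul_sin_sq hk).intervalIntegrable _ _),
    intervalIntegral.integral_const_mul]

lemma ellGap_zero : ellGap 0 = π / 2 := by
  have hE : ellE 0 = π / 2 := by simp [ellE]
  have hK : ellK 0 = π / 2 := by simp [ellK]
  rw [ellGap, hE, hK]
  ring

lemma strictAntiOn_ellGap : StrictAntiOn ellGap (Ico 0 1) := by
  intro a ha b hb hab
  have ha2 : a ^ 2 < 1 := by nlinarith [ha.1, ha.2]
  have hb2 : b ^ 2 < 1 := by nlinarith [hb.1, hb.2]
  have hab2 : a ^ 2 < b ^ 2 := pow_lt_pow_left₀ hab ha.1 two_ne_zero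
  rw [ellGap_eq_integral ha2, ellGap_eq_integral hb2]
  refine intervalIntegral.integral_lt_integral_of_continuousOn_of_le_of_exists_lt (by positivity)
    (continuous_gapIntegrand_one_sub_sq_mul_sin_sq hb2).continuousOn
    (continuous_gapIntegrand_one_sub_sq_mul_sin_sq ha2).continuousOn
    (fun t _ => ?_) ⟨π / 2, ⟨by positivity, le_rfl⟩, ?_⟩
  · exact strictMonoOn_gapIntegrand.monotoneOn (one_sub_sq_mul_sin_sq_pos hb2 t)
      (one_sub_sq_mul_sin_sq_pos ha2 t) (by nlinarith [sq_nonneg (sin t)])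
  · simp only [sin_pi_div_two, one_pow, mul_one]
    exact strictMonoOn_gapIntegrand (sub_pos.2 hb2) (sub_pos.2 ha2) (by linarith)

lemma continuousAt_ellGap {k : ℝ} (hk : k ^ 2 < 1) : ContinuousAt ellGap k := by
  obtain ⟨c, hc, hkc⟩ : ∃ c : ℝ, 0 < c ∧ k ^ 2 < 1 - c :=
    ⟨(1 - k ^ 2) / 2, by linarith, by linarith⟩
  have hjoint : Continuous fun p : ℝ × ℝ => gapIntegrand (max (1 - p.1 ^ 2 * sin p.2 ^ 2) c) :=
    continuousOn_gapIntegrand.comp_continuous (Continuous.max (by fun_prop) continuous_const)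
      fun _ => lt_max_of_lt_right hc
  have hcont : Continuous fun x =>
      ∫ t in (0:ℝ)..(π/2), gapIntegrand (max (1 - x ^ 2 * sin t ^ 2) c) :=
    intervalIntegral.continuous_parametric_intervalIntegral_of_continuous' hjoint _ _
  -- Near `k` the argument of `gapIntegrand` stays above `c`, so truncating it at `c` changes nothing.
  refine hcont.continuousAt.congr ?_
  filter_upwards [(isOpen_lt (continuous_pow 2) continuous_const).mem_nhds hkc]
    with x (hx : x ^ 2 < 1 - c)
  rw [ellGap_eq_integral (by linarith)]
  refine intervalIntegral.integral_congr fun t _ => ?_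
  rw [max_eq_left]
  linarith [one_sub_sq_le_one_sub_sq_mul_sin_sq x t]

lemma continuousOn_ellGap : ContinuousOn ellGap (Ioo (-1) 1) :=
  fun _ hk => (continuousAt_ellGap (by nlinarith [hk.1, hk.2])).continuousWithinAt

lemma ellE_le_pi_div_two (k : ℝ) : ellE k ≤ π / 2 := by
  have := intervalIntegral.integral_mono_on (by positivity : (0:ℝ) ≤ π / 2)
    (Continuous.intervalIntegrable (by fun_prop) _ _)
    (intervalIntegrable_const (μ := MeasureTheory.volume))
    fun t _ => sqrt_le_one.2 (by nlinarith [sq_nonneg (k * sin t)] : 1 - k ^ 2 * sin t ^ 2 ≤ 1)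
  simpa [ellE] using this

lemma integral_one_div_add_pi_div_two_sub {ε : ℝ} (hε : 0 < ε) :
    ∫ t in (0:ℝ)..(π/2), 1 / (ε + (π / 2 - t)) = log (1 + π / 2 / ε) := by
  rw [intervalIntegral.integral_comp_sub_left (fun x => 1 / (ε + x)),
    intervalIntegral.integral_comp_add_left (fun x => 1 / x)]
  simp only [sub_self, sub_zero, add_zero, one_div]
  rw [integral_inv_of_pos hε (by positivity)]
  congr 1
  field_simp

lemma log_one_add_pi_div_two_div_le_ellK {k : ℝ} (hk : k ^ 2 < 1) :
    log (1 + π / 2 / √(1 - k ^ 2)) ≤ ellK k := by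
  set ε := √(1 - k ^ 2)
  have hε : 0 < ε := sqrt_pos.2 (by linarith)
  rw [← integral_one_div_add_pi_div_two_sub hε]
  refine intervalIntegral.integral_mono_on (by positivity) ?_
    ((continuous_one_div_sqrt_one_sub_sq_mul_sin_sq hk).intervalIntegrable _ _) fun t ht => ?_
  · exact (continuousOn_const.div (by fun_prop) fun t ht => by linarith [ht.2])
      |>.intervalIntegrable_of_Icc (by positivity)
  · have hcos : cos t ≤ π / 2 - t := sin_pi_div_two_sub t ▸ sin_le (by linarith [ht.2])
    have hcos0 : 0 ≤ cos t := cos_nonneg_of_mem_Icc ⟨by linarith [ht.1, pi_pos], ht.2⟩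
    -- `1 - k² sin² t = ε² + k² cos² t` and `0 ≤ cos t ≤ π/2 - t`
    have hε2 : ε ^ 2 = 1 - k ^ 2 := sq_sqrt (by linarith)
    refine one_div_le_one_div_of_le (sqrt_pos.2 (one_sub_sq_mul_sin_sq_pos hk t))
      (sqrt_le_iff.2 ⟨by linarith [ht.2], ?_⟩)
    nlinarith [sin_sq_add_cos_sq t, mul_le_mul hcos hcos hcos0 (by linarith), sq_nonneg k,
      mul_nonneg hε.le (by linarith [ht.2] : 0 ≤ π / 2 - t)]

lemma tendsto_log_one_add_div_nhdsGT_zero {c : ℝ} (hc : 0 < c) :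
    Tendsto (fun ε => log (1 + c / ε)) (𝓝[>] 0) atTop :=
  tendsto_log_atTop.comp <| tendsto_atTop_add_const_left _ 1 <|
    (tendsto_inv_nhdsGT_zero.const_mul_atTop hc).congr fun _ => (div_eq_mul_inv _ _).symm

lemma tendsto_ellK_nhdsLT_one : Tendsto ellK (𝓝[<] 1) atTop := by
  have hk : ∀ᶠ k in 𝓝[<] (1:ℝ), k ^ 2 < 1 := by
    filter_upwards [Ioo_mem_nhdsLT (show (-1:ℝ) < 1 by norm_num)] with k hk
    nlinarith [hk.1, hk.2]
  have hε : Tendsto (fun k : ℝ => √(1 - k ^ 2)) (𝓝[<] 1) (𝓝[>] 0) := by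
    refine tendsto_nhdsWithin_iff.2 ⟨?_, hk.mono fun k hk => sqrt_pos.2 (sub_pos.2 hk)⟩
    have : Continuous fun k : ℝ => √(1 - k ^ 2) := by fun_prop
    simpa using (this.tendsto 1).mono_left nhdsWithin_le_nhds
  exact tendsto_atTop_mono' _ (hk.mono fun k => log_one_add_pi_div_two_div_le_ellK)
    ((tendsto_log_one_add_div_nhdsGT_zero (by positivity)).comp hε)

lemma exists_ellGap_neg : ∃ b ∈ Ioo (0:ℝ) 1, ellGap b < 0 := by
  have hneg : ∀ᶠ k in 𝓝[<] (1:ℝ), k ∈ Ioo 0 1 ∧ ellGap k < 0 := by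
    filter_upwards [Ioo_mem_nhdsLT one_pos, tendsto_ellK_nhdsLT_one.eventually_gt_atTop π]
      with k hk hK
    exact ⟨hk, by linarith [ellE_le_pi_div_two k, show ellGap k = 2 * ellE k - ellK k from rfl]⟩
  exact hneg.exists

/-- There is a unique `k₀ ∈ (0,1)` with `2E(k₀) − K(k₀) = 0`; moreover
`2E − K > 0` on `(0,k₀)` and `2E − K < 0` on `(k₀,1)`. -/
theorem exists_unique_k0 :
    ∃ k₀ ∈ Ioo (0:ℝ) 1,
      2 * ellE k₀ - ellK k₀ = 0 ∧
      (∀ k ∈ Ioo (0:ℝ) 1, 2 * ellE k - ellK k = 0 → k = k₀) ∧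
      (∀ k ∈ Ioo (0:ℝ) k₀, 0 < 2 * ellE k - ellK k) ∧
      (∀ k ∈ Ioo k₀ (1:ℝ), 2 * ellE k - ellK k < 0) := by
  obtain ⟨b, hb, hb_neg⟩ := exists_ellGap_neg
  have hsign : (0:ℝ) ∈ Icc (ellGap b) (ellGap 0) := ⟨hb_neg.le, ellGap_zero ▸ by positivity⟩
  obtain ⟨k₀, hk₀, hzero⟩ := intermediate_value_Icc' hb.1.le
    (continuousOn_ellGap.mono (Icc_subset_Ioo (by norm_num) hb.2)) hsign
  have hk₀pos : 0 < k₀ := hk₀.1.lt_of_ne <| by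
    rintro rfl
    linarith [ellGap_zero, pi_pos]
  have hk₀mem : k₀ ∈ Ico 0 1 := ⟨hk₀pos.le, hk₀.2.trans_lt hb.2⟩
  refine ⟨k₀, ⟨hk₀pos, hk₀mem.2⟩, hzero, fun k hk hk_zero => ?_, fun k hk => ?_, fun k hk => ?_⟩
  · exact strictAntiOn_ellGap.injOn ⟨hk.1.le, hk.2⟩ hk₀mem (hk_zero.trans hzero.symm)
  · exact hzero ▸ strictAntiOn_ellGap ⟨hk.1.le, hk.2.trans hk₀mem.2⟩ hk₀mem hk.2
  · exact hzero ▸ strictAntiOn_ellGap hk₀mem ⟨hk₀pos.le.trans hk.1.le, hk.2⟩ hk.1
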